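/- arXiv:math/0402395 — 2 statements merged into one kernel-verified Lean document; each statement's English description precedes it below -/
import Mathlib

section
/- Let G be a graph with an involutive graph homomorphism φ: G → G that flips an edge, i.e., there exist adjacent vertices a ≠ b of G with φ(a) = b. Then for any graph H without loops, the induced Z_2-action φ_H on Hom(G, H) (sending a cell η to η∘φ) is free: no cell of Hom(G, H) with η = η∘φ exists, and the action has no fixed points. -/
/-!
If `η ∘ φ = η` then `η a = η b` along the flipped edge `ab`, so any `c ∈ η a` is adjacent to
itself in `H`. A point of the geometric realization lies in the interior of the cell formed by
the supports of its distributions, and `φ_H` maps it into the cell `supp ∘ φ`, so a fixed point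
would give a fixed cell.
-/

open Finset

noncomputable section
namespace Lovasz




structure Graph where
  V : Type
  fintypeV : Fintype V
  adj : V → V → Prop
  symm : ∀ {x y : V}, adj x y → adj y x

attribute [instance] Graph.fintypeV

def Graph.Loopless (G : Graph) : Prop := ∀ v : G.V, ¬ G.adj v v

def GraphHom (G H : Graph) : Type :=
  {f : G.V → H.V // ∀ x y : G.V, G.adj x y → H.adj (f x) (f y)}

@[reducible] def completeGraph (n : ℕ) : Graph where
  V := Fin n
  fintypeV := inferInstance
  adj x y := x ≠ y
  symm h := h.symm

def chromaticNumber (G : Graph) : ℕ :=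
  sInf {n : ℕ | Nonempty (GraphHom G (completeGraph n))}

@[reducible] def oddCycle (r : ℕ) : Graph where
  V := ZMod (2 * r + 1)
  fintypeV := inferInstance
  adj x y := x = y + 1 ∨ y = x + 1
  symm h := h.symm

/-- The cycle with `m` vertices (trivial graph for `m = 0`). -/
@[reducible] def cycleGraph : ℕ → Graph
  | 0 => ⟨Empty, inferInstance, fun _ _ => False, fun h => h⟩
  | (n+1) =>
    { V := ZMod (n+1)
      fintypeV := inferInstance
      adj := fun x y => x = y + 1 ∨ y = x + 1
      symm := fun h => h.symm }

/-- The geometric realization of the polyhedral complex `Hom(G,H)`: the space of functions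
assigning to each vertex of `G` a probability distribution on `V(H)`, such that any choice of
vertices from the supports yields a graph homomorphism. -/
abbrev HomComplex (G H : Graph) : Type :=
  {f : G.V → H.V → ℝ //
    (∀ v w, 0 ≤ f v w) ∧ (∀ v, ∑ w, f v w = 1) ∧
    ∀ x y : G.V, G.adj x y → ∀ a b : H.V, f x a ≠ 0 → f y b ≠ 0 → H.adj a b}

/-- The geometric realization of the simplicial complex `Hom₊(G,H)`. -/
abbrev HomPlus (G H : Graph) : Type :=
  {f : G.V → H.V → ℝ //
    (∀ v w, 0 ≤ f v w) ∧ (∑ v, ∑ w, f v w = 1) ∧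
    ∀ x y : G.V, G.adj x y → ∀ a b : H.V, f x a ≠ 0 → f y b ≠ 0 → H.adj a b}

/-- The geometric realization of the independence complex `Ind(G)`. -/
abbrev IndSpace (G : Graph) : Type :=
  {f : G.V → ℝ //
    (∀ v, 0 ≤ f v) ∧ (∑ v, f v = 1) ∧
    ∀ x y : G.V, G.adj x y → f x = 0 ∨ f y = 0}

/-- The map `Hom(G',H) → Hom(G,H)` induced by a graph homomorphism `ι : G → G'`. -/
def precompHom {G G' : Graph} (ι : GraphHom G G') (H : Graph) :
    C(HomComplex G' H, HomComplex G H) where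
  toFun f := ⟨fun v w => f.1 (ι.1 v) w,
    fun v w => f.2.1 (ι.1 v) w,
    fun v => f.2.2.1 (ι.1 v),
    fun x y h a b ha hb => f.2.2.2 (ι.1 x) (ι.1 y) (ι.2 x y h) a b ha hb⟩
  continuous_toFun := by
    apply Continuous.subtype_mk
    apply continuous_pi; intro v
    apply continuous_pi; intro w
    exact (continuous_apply w).comp ((continuous_apply (ι.1 v)).comp continuous_subtype_val)

/-- The map `Hom₊(G',H) → Hom₊(G,H)` induced by an *invertible* graph homomorphism is only used
for involutions, where precomposition preserves the normalization; for bijective `ι` the total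
sum is preserved. -/
def precompHomPlus {G : Graph} (ι : GraphHom G G) (hbij : Function.Bijective ι.1) (H : Graph) :
    C(HomPlus G H, HomPlus G H) where
  toFun f := ⟨fun v w => f.1 (ι.1 v) w,
    fun v w => f.2.1 (ι.1 v) w,
    by
      show ∑ v, ∑ w, f.1 (ι.1 v) w = 1
      have h2 : ∑ v, ∑ w, f.1 (ι.1 v) w = ∑ v, ∑ w, f.1 v w :=
        Fintype.sum_bijective ι.1 hbij _ _ (fun v => rfl)
      rw [h2]; exact f.2.2.1,
    fun x y h a b ha hb => f.2.2.2 (ι.1 x) (ι.1 y) (ι.2 x y h) a b ha hb⟩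
  continuous_toFun := by
    apply Continuous.subtype_mk
    apply continuous_pi; intro v
    apply continuous_pi; intro w
    exact (continuous_apply w).comp ((continuous_apply (ι.1 v)).comp continuous_subtype_val)

lemma precompHom_invol {G : Graph} (γ : GraphHom G G) (hγ : ∀ v, γ.1 (γ.1 v) = v) (H : Graph) :
    ∀ f, precompHom γ H (precompHom γ H f) = f := by
  intro f
  apply Subtype.ext
  funext v w
  show f.1 (γ.1 (γ.1 v)) w = f.1 v w
  rw [hγ]

lemma precompHomPlus_invol {G : Graph} (γ : GraphHom G G) (hbij : Function.Bijective γ.1)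
    (hγ : ∀ v, γ.1 (γ.1 v) = v) (H : Graph) :
    ∀ f, precompHomPlus γ hbij H (precompHomPlus γ hbij H f) = f := by
  intro f
  apply Subtype.ext
  funext v w
  show f.1 (γ.1 (γ.1 v)) w = f.1 v w
  rw [hγ]

/-- The reflection `x ↦ -x` of the odd cycle. -/
def cycleReflect (r : ℕ) : GraphHom (oddCycle r) (oddCycle r) :=
  ⟨fun x => (-x : ZMod (2 * r + 1)), by
    intro x y h
    change (x : ZMod (2 * r + 1)) = y + 1 ∨ y = x + 1 at h
    change (-x : ZMod (2 * r + 1)) = -y + 1 ∨ (-y : ZMod (2 * r + 1)) = -x + 1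
    rcases h with h | h
    · right; rw [h]; ring
    · left; rw [h]; ring⟩

lemma cycleReflect_invol (r : ℕ) : ∀ v, (cycleReflect r).1 ((cycleReflect r).1 v) = v :=
  fun v => neg_neg (v : ZMod (2 * r + 1))

lemma cycleReflect_bijective (r : ℕ) : Function.Bijective (cycleReflect r).1 :=
  Function.Involutive.bijective (fun v => neg_neg (v : ZMod (2 * r + 1)))

open scoped Topology in
/-- `k`-connectedness (`k ≥ -1`): nonempty, path-connected (when `k ≥ 0`), and all homotopy
groups `π_i` vanish for `1 ≤ i ≤ k`. -/
def KConnected (k : ℤ) (X : Type) [TopologicalSpace X] : Prop :=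
  Nonempty X ∧ ((0:ℤ) ≤ k → PathConnectedSpace X) ∧
    ∀ i : ℕ, 1 ≤ i → (i : ℤ) ≤ k → ∀ x : X, Subsingleton (HomotopyGroup (Fin i) X x)

theorem not_loopless_of_cell_eq_of_adj {G H : Graph} (η : G.V → Set H.V)
    (hη : ∀ x y : G.V, G.adj x y → ∀ c ∈ η x, ∀ d ∈ η y, H.adj c d)
    {a b : G.V} (hadj : G.adj a b) (ha : (η a).Nonempty) (hab : η a = η b) :
    ¬ H.Loopless := by
  obtain ⟨c, hc⟩ := ha
  exact fun hH => hH c (hη a b hadj c hc c (hab ▸ hc))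

theorem comp_ne_self_of_flip {G H : Graph} (φ : GraphHom G G) {a b : G.V}
    (hadj : G.adj a b) (hflip : φ.1 a = b) (hH : H.Loopless) (η : G.V → Set H.V)
    (hne : ∀ v, (η v).Nonempty)
    (hη : ∀ x y : G.V, G.adj x y → ∀ c ∈ η x, ∀ d ∈ η y, H.adj c d) :
    (fun v => η (φ.1 v)) ≠ η := by
  intro heq
  have hab : η a = η b := by rw [← hflip]; exact (congrFun heq a).symm
  exact not_loopless_of_cell_eq_of_adj η hη hadj (hne a) hab hH

namespace HomComplex

variable {G H : Graph}

/-- The cell of `Hom(G,H)` in whose relative interior `p` lies. -/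
def supp (p : HomComplex G H) (v : G.V) : Set H.V := {w | p.1 v w ≠ 0}

theorem supp_nonempty (p : HomComplex G H) (v : G.V) : (p.supp v).Nonempty := by
  by_contra h
  have hzero : ∀ w, p.1 v w = 0 := fun w => by_contra fun hw => h ⟨w, hw⟩
  simpa [hzero] using p.2.2.1 v

theorem supp_adj (p : HomComplex G H) :
    ∀ x y : G.V, G.adj x y → ∀ c ∈ p.supp x, ∀ d ∈ p.supp y, H.adj c d :=
  fun x y hxy c hc d hd => p.2.2.2 x y hxy c d hc hd

theorem supp_precompHom {G' : Graph} (ι : GraphHom G G') (p : HomComplex G' H) :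
    (precompHom ι H p).supp = fun v => p.supp (ι.1 v) :=
  rfl

end HomComplex

theorem induced_action_is_free_general (G H : Graph) (φ : GraphHom G G)
    (a b : G.V) (hadj : G.adj a b) (hflip : φ.1 a = b)
    (hH : H.Loopless) :
    (∀ η : G.V → Set H.V, (∀ v, (η v).Nonempty) →
        (∀ x y : G.V, G.adj x y → ∀ c ∈ η x, ∀ d ∈ η y, H.adj c d) →
        (fun v => η (φ.1 v)) ≠ η) ∧
    (∀ p : HomComplex G H, precompHom φ H p ≠ p) := by
  refine ⟨comp_ne_self_of_flip φ hadj hflip hH, fun p heq => ?_⟩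
  refine comp_ne_self_of_flip φ hadj hflip hH p.supp p.supp_nonempty p.supp_adj ?_
  rw [← HomComplex.supp_precompHom, heq]

/-- If an involution `φ` of `G` flips an edge, then the induced `ℤ/2`-action on `Hom(G,H)` is
free for every loopless `H`: no cell satisfies `η ∘ φ = η`, and the induced involution of the
space `Hom(G,H)` has no fixed points. -/
theorem induced_action_is_free (G H : Graph) (φ : GraphHom G G)
    (hinv : ∀ v, φ.1 (φ.1 v) = v)
    (a b : G.V) (hab : a ≠ b) (hadj : G.adj a b) (hflip : φ.1 a = b)
    (hH : H.Loopless) :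
    (∀ η : G.V → Set H.V, (∀ v, (η v).Nonempty) →
        (∀ x y : G.V, G.adj x y → ∀ c ∈ η x, ∀ d ∈ η y, H.adj c d) →
        (fun v => η (φ.1 v)) ≠ η) ∧
    (∀ p : HomComplex G H, precompHom φ H p ≠ p) :=
  induced_action_is_free_general G H φ a b hadj hflip hH

end Lovasz
end
end

section
/- For any two graphs G and H, the simplicial complex Hom_+(G, H) is isomorphic to the independence complex Ind(G × ∁H) of the direct product of G with the strong complement of H. In particular, Hom_+(G, K_n) is isomorphic to the n-fold simplicial join Ind(G) * Ind(G) * … * Ind(G). -/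
open Finset

noncomputable section
namespace Lovasz




/-- The direct (categorical) product of graphs. -/
@[reducible] def Graph.prod (G H : Graph) : Graph where
  V := G.V × H.V
  fintypeV := inferInstance
  adj p q := G.adj p.1 q.1 ∧ H.adj p.2 q.2
  symm h := ⟨G.symm h.1, H.symm h.2⟩

/-- The strong complement of a graph: `E(∁H) = V × V ∖ E(H)`. -/
@[reducible] def Graph.scompl (H : Graph) : Graph where
  V := H.V
  fintypeV := inferInstance
  adj x y := ¬ H.adj x y
  symm h h2 := h (H.symm h2)

/-- An independent set of a graph. -/
def Independent (G : Graph) (S : Set G.V) : Prop := ∀ x ∈ S, ∀ y ∈ S, ¬ G.adj x y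

/-- The simplices of `Hom₊(G,H)`: functions `η : V(G) → 2^{V(H)}`, not identically `∅`, such
that any choice from the `η`-values along an edge of `G` lands in an edge of `H`. -/
def IsHomPlusSimplex (G H : Graph) (η : G.V → Set H.V) : Prop :=
  (∃ v, (η v).Nonempty) ∧ ∀ x y : G.V, G.adj x y → ∀ a ∈ η x, ∀ b ∈ η y, H.adj a b

/-- General auxiliary iso: `Hom₊(G,H)` face poset ≃ nonempty independent sets of `G × ∁H`. -/
def homPlusIso (G H : Graph) :
    {η : G.V → Set H.V // IsHomPlusSimplex G H η} ≃o
      {S : Set (G.V × H.V) // S.Nonempty ∧ Independent (G.prod H.scompl) S} where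
  toFun η := ⟨{p | p.2 ∈ η.1 p.1}, by
    obtain ⟨⟨v, w, hw⟩, hadj⟩ := η.2
    exact ⟨(v, w), hw⟩, by
    rintro ⟨x, a⟩ hx ⟨y, b⟩ hy ⟨hG, hH⟩
    exact hH (η.2.2 x y hG a hx b hy)⟩
  invFun S := ⟨fun v => {w | (v, w) ∈ S.1}, by
    obtain ⟨⟨⟨v, w⟩, hvw⟩, hind⟩ := S.2
    refine ⟨⟨v, w, hvw⟩, fun x y hG a ha b hb => ?_⟩
    by_contra hH
    exact hind (x, a) ha (y, b) hb ⟨hG, hH⟩⟩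
  left_inv η := rfl
  right_inv S := rfl
  map_rel_iff' {η η'} := by
    show {p : G.V × H.V | p.2 ∈ η.1 p.1} ⊆ {p | p.2 ∈ η'.1 p.1} ↔ η ≤ η'
    exact ⟨fun h v w hw => @h (v, w) hw, fun h p hp => h p.1 hp⟩

/-- Transfer an order iso along an equivalence of the target predicate. -/
def subtypeOrderIso {α : Type*} [Preorder α] {P Q : α → Prop} (h : ∀ a, P a ↔ Q a) :
    {a // P a} ≃o {a // Q a} where
  toFun a := ⟨a.1, (h a.1).mp a.2⟩
  invFun a := ⟨a.1, (h a.1).mpr a.2⟩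
  left_inv a := rfl
  right_inv a := rfl
  map_rel_iff' := Iff.rfl

/-- `Hom₊(G,H)` is isomorphic, as a simplicial complex, to the independence complex
`Ind(G × ∁H)`; and `Hom₊(G,K_n)` is isomorphic to the `n`-fold join `Ind(G)^{*n}`, whose
simplices are the subsets of `V(G) × [n]` all of whose slices are independent in `G`.
The isomorphisms are order isomorphisms of the face posets, given on vertices by
`(v,w) ∈ η ↔ w ∈ η(v)`. -/
theorem homPlus_iso_ind_prod_scompl (G H : Graph) :
    (∃ e : {η : G.V → Set H.V // IsHomPlusSimplex G H η} ≃o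
        {S : Set (G.V × H.V) // S.Nonempty ∧ Independent (G.prod H.scompl) S},
      ∀ (η : {η : G.V → Set H.V // IsHomPlusSimplex G H η}) (v : G.V) (w : H.V),
        w ∈ η.1 v ↔ (v, w) ∈ (e η).1) ∧
    ∀ n : ℕ, ∃ e : {η : G.V → Set (Fin n) // IsHomPlusSimplex G (completeGraph n) η} ≃o
        {S : Set (G.V × Fin n) //
          S.Nonempty ∧ ∀ i : Fin n, Independent G {v : G.V | (v, i) ∈ S}},
      ∀ (η : {η : G.V → Set (Fin n) // IsHomPlusSimplex G (completeGraph n) η})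
        (v : G.V) (i : Fin n), i ∈ η.1 v ↔ (v, i) ∈ (e η).1 := by
  constructor
  · exact ⟨homPlusIso G H, fun η v w => Iff.rfl⟩
  · intro n
    refine ⟨(homPlusIso G (completeGraph n)).trans (subtypeOrderIso fun S => ?_),
      fun η v i => Iff.rfl⟩
    constructor
    · rintro ⟨hne, hind⟩
      refine ⟨hne, fun i x hx y hy hG => ?_⟩
      exact hind (x, i) hx (y, i) hy ⟨hG, fun h => h rfl⟩
    · rintro ⟨hne, hind⟩
      refine ⟨hne, ?_⟩
      rintro ⟨x, a⟩ hx ⟨y, b⟩ hy ⟨hG, hab⟩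
      have : a = b := by by_contra h; exact hab h
      subst this
      exact hind a x hx y hy hG

end Lovasz
end
end
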